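/- arXiv:1703.01064 — 2 statements merged into one kernel-verified Lean document; each statement's English description precedes it below -/
import Mathlib

section
/- Let g(x) = (ax+b)/(cx+d) with real coefficients, c ≠ 0, ad − bc = 1, and −2 < a + d < 2, and suppose the conjugate rotation h ∘ g ∘ h⁻¹ of the unit circle (where h(x) = (x − α)/(x − ᾱ) and α is a non-real fixed point of g) is an irrational rotation. Then for any b₀ ∈ ℝ, either gᵏ(b₀) = ∞ for some k ∈ ℕ, or the solution sequence b_{n+1} = g(b_n) has no Hyers-Ulam stability on ℝ. -/
open OnePoint Complex

open Classical in
/-- The Möbius map `z ↦ (az+b)/(cz+d)` as a self-map of the one-point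
compactification (Riemann sphere for `K = ℂ`, extended real line for `K = ℝ`). -/
noncomputable def mob {K : Type*} [Field K] (a b c d : K) : OnePoint K → OnePoint K :=
  fun z => Option.rec (motive := fun _ => OnePoint K)
    (if c = 0 then (∞ : OnePoint K) else ((a / c : K) : OnePoint K))
    (fun w => if c * w + d = 0 then (∞ : OnePoint K)
      else (((a * w + b) / (c * w + d) : K) : OnePoint K)) z

/-!
The Cayley map `h(z) = (z - α) / (z - ᾱ)` sends `ℝ` into the unit circle and conjugates `g` to
the rotation by `e^{iθ}`. If the orbit `bₙ` of `b₀` never reaches `∞`, then `h(bₙ) = e^{inθ} h(b₀)`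
is an orbit of an irrational rotation, hence dense in the circle, so it comes arbitrarily close to
`1 = h(∞)`. Since `α - ᾱ = (x - ᾱ)(1 - h(x))`, this forces `|bₙ|` to be unbounded, while the
constant sequence `0` is an `ε`-approximate solution as soon as `ε > |g(0)|`.
-/

open ComplexConjugate

theorem mob_coe_of_ne {K : Type*} [Field K] {a b c d z : K} (hz : c * z + d ≠ 0) :
    mob a b c d z = ((a * z + b) / (c * z + d) : K) :=
  if_neg hz

theorem exists_orbit_of_iterate_ne_infty {K : Type*} [Field K] {a b c d x : K}
    (h : ∀ k, 1 ≤ k → (mob a b c d)^[k] x ≠ ∞) :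
    ∃ w : ℕ → K, (∀ n, (mob a b c d)^[n] x = w n) ∧
      ∀ n, c * w n + d ≠ 0 ∧ w (n + 1) = (a * w n + b) / (c * w n + d) := by
  have hfin : ∀ n, (mob a b c d)^[n] x ≠ ∞ := fun
    | 0 => coe_ne_infty x
    | n + 1 => h (n + 1) n.succ_pos
  choose w hw using fun n => ne_infty_iff_exists.1 (hfin n)
  have hden : ∀ n, c * w n + d ≠ 0 := fun n hzero => by
    apply hfin (n + 1)
    rw [Function.iterate_succ_apply', ← hw n]
    exact if_pos hzero
  refine ⟨w, fun n => (hw n).symm, fun n => ⟨hden n, ?_⟩⟩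
  rw [← coe_eq_coe, hw (n + 1), Function.iterate_succ_apply', ← hw n, mob_coe_of_ne (hden n)]

theorem Circle.denseRange_exp_pow {θ : ℝ} (hθ : Irrational (θ / (2 * Real.pi))) :
    DenseRange (fun n : ℕ => Circle.exp θ ^ n) := by
  have : Fact (0 < 2 * Real.pi) := ⟨by positivity⟩
  have hdense : DenseRange (fun n : ℕ => n • (θ : AddCircle (2 * Real.pi))) :=
    denseRange_zsmul_iff_nsmul.1 (AddCircle.denseRange_zsmul_coe_iff.2 hθ)
  convert AddCircle.homeomorphCircle'.surjective.denseRange.comp hdense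
    AddCircle.homeomorphCircle'.continuous using 2 with n
  rw [Function.comp_apply, ← AddCircle.coe_nsmul, AddCircle.homeomorphCircle'_apply_mk,
    Circle.exp_nsmul]

theorem exists_norm_one_sub_exp_pow_mul_lt {θ : ℝ} (hθ : Irrational (θ / (2 * Real.pi)))
    {u : ℂ} (hu : ‖u‖ = 1) {δ : ℝ} (hδ : 0 < δ) :
    ∃ n : ℕ, ‖1 - Complex.exp (θ * I) ^ n * u‖ < δ := by
  let v : Circle := ⟨u, by simpa [Submonoid.unitSphere] using hu⟩
  obtain ⟨n, hn⟩ := (Circle.denseRange_exp_pow hθ).exists_dist_lt v⁻¹ hδ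
  refine ⟨n, ?_⟩
  have hu0 : u ≠ 0 := by rintro rfl; simp at hu
  calc ‖1 - Complex.exp (θ * I) ^ n * u‖ = ‖u‖ * ‖u⁻¹ - Complex.exp (θ * I) ^ n‖ := by
        rw [← norm_mul, mul_sub, mul_inv_cancel₀ hu0, mul_comm]
    _ = dist v⁻¹ (Circle.exp θ ^ n) := by
        rw [hu, one_mul, ← Circle.coe_exp, ← Circle.coe_pow, ← dist_eq_norm]; rfl
    _ < δ := hn

noncomputable def cayley (α z : ℂ) : ℂ := (z - α) / (z - conj α)

section Cayley

variable {α : ℂ}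

theorem ofReal_sub_conj_ne_zero (hα : α.im ≠ 0) (x : ℝ) : (x : ℂ) - conj α ≠ 0 := by
  intro h
  exact hα (by simpa using congrArg im h)

theorem norm_cayley_ofReal (hα : α.im ≠ 0) (x : ℝ) : ‖cayley α x‖ = 1 := by
  have hnum : conj ((x : ℂ) - conj α) = x - α := by simp
  rw [cayley, norm_div, ← hnum, norm_conj,
    div_self (norm_ne_zero_iff.2 (ofReal_sub_conj_ne_zero hα x))]

theorem sub_conj_eq_mul_one_sub_cayley {z : ℂ} (hz : z - conj α ≠ 0) :
    α - conj α = (z - conj α) * (1 - cayley α z) := by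
  rw [cayley]
  field_simp
  ring

theorem norm_sub_conj_le (hα : α.im ≠ 0) (x : ℝ) :
    ‖α - conj α‖ ≤ (|x| + ‖α‖) * ‖1 - cayley α x‖ := by
  rw [sub_conj_eq_mul_one_sub_cayley (ofReal_sub_conj_ne_zero hα x), norm_mul]
  gcongr
  calc ‖(x : ℂ) - conj α‖ ≤ ‖(x : ℂ)‖ + ‖conj α‖ := norm_sub_le _ _
    _ = |x| + ‖α‖ := by rw [norm_real, Real.norm_eq_abs, norm_conj]

theorem mob_coe_eq_cayley {z : ℂ} (hz : z - conj α ≠ 0) :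
    mob 1 (-α) 1 (-conj α) z = cayley α z := by
  rw [mob_coe_of_ne (by simpa [← sub_eq_add_neg] using hz)]
  simp [cayley, sub_eq_add_neg]

theorem cayley_mob_eq_mul {a b c d : ℝ} (hα : α.im ≠ 0) {e : ℂ}
    (hconj : ∀ z : OnePoint ℂ, mob 1 (-α) 1 (-conj α) (mob (a : ℂ) b c d z) =
      mob e 0 0 1 (mob 1 (-α) 1 (-conj α) z))
    {x : ℝ} (hx : c * x + d ≠ 0) :
    cayley α ((a * x + b) / (c * x + d) : ℝ) = e * cayley α x := by
  have hmob : mob (a : ℂ) b c d (x : ℂ) = (((a * x + b) / (c * x + d) : ℝ) : ℂ) := by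
    rw [mob_coe_of_ne (by exact_mod_cast hx)]
    push_cast
    rfl
  have h := hconj ((x : ℂ) : OnePoint ℂ)
  rw [hmob, mob_coe_eq_cayley (ofReal_sub_conj_ne_zero hα _),
    mob_coe_eq_cayley (ofReal_sub_conj_ne_zero hα x), mob_coe_of_ne (by simp), coe_eq_coe] at h
  simpa using h

theorem exists_lt_abs_of_cayley_eq_rotation (hα : α.im ≠ 0) {θ : ℝ}
    (hθ : Irrational (θ / (2 * Real.pi))) {w : ℕ → ℝ}
    (hw : ∀ n, cayley α (w (n + 1)) = Complex.exp (θ * I) * cayley α (w n)) (M : ℝ) :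
    ∃ n, M < |w n| := by
  have hpow : ∀ n, cayley α (w n) = Complex.exp (θ * I) ^ n * cayley α (w 0) := fun n => by
    induction n with
    | zero => simp
    | succ n ih => rw [hw, ih, pow_succ']; ring
  have hgap : 0 < ‖α - conj α‖ := norm_pos_iff.2 fun h => hα (by simpa using congrArg im h)
  obtain ⟨n, hn⟩ := exists_norm_one_sub_exp_pow_mul_lt hθ (norm_cayley_ofReal hα (w 0))
    (div_pos hgap (by positivity : 0 < |M| + ‖α‖ + 1))
  refine ⟨n, lt_of_not_ge fun hle => ?_⟩
  rw [← hpow, lt_div_iff₀ (by positivity)] at hn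
  have := norm_sub_conj_le hα (w n)
  nlinarith [le_abs_self M, norm_nonneg (1 - cayley α (w n))]

end Cayley

theorem stmt7_general (a b c d : ℝ) (α : ℂ) (him : α.im ≠ 0)
    (θ : ℝ) (hirr : Irrational (θ / (2 * Real.pi)))
    (hconj : ∀ z : OnePoint ℂ,
      mob 1 (-α) 1 (-(starRingEnd ℂ α)) (mob (a : ℂ) (b : ℂ) (c : ℂ) (d : ℂ) z) =
        mob (Complex.exp ((θ : ℂ) * Complex.I)) 0 0 1
          (mob 1 (-α) 1 (-(starRingEnd ℂ α)) z))
    (b₀ : ℝ) :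
    (∃ k : ℕ, 1 ≤ k ∧ (mob a b c d)^[k] ((b₀ : OnePoint ℝ)) = ∞) ∨
    (∃ ε > (0 : ℝ), ∃ aseq : ℕ → ℝ,
      (∀ n : ℕ, |aseq (n + 1) - (a * aseq n + b) / (c * aseq n + d)| ≤ ε) ∧
      ∀ M : ℝ, ∃ n : ℕ, ∃ w : ℝ,
        (mob a b c d)^[n] ((b₀ : OnePoint ℝ)) = (w : OnePoint ℝ) ∧ M < |aseq n - w|) := by
  by_cases hinfty : ∃ k : ℕ, 1 ≤ k ∧ (mob a b c d)^[k] ((b₀ : OnePoint ℝ)) = ∞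
  · exact Or.inl hinfty
  push Not at hinfty
  obtain ⟨w, horbit, hstep⟩ := exists_orbit_of_iterate_ne_infty hinfty
  have hrot : ∀ n, cayley α (w (n + 1)) = Complex.exp (θ * I) * cayley α (w n) := fun n => by
    rw [(hstep n).2]
    exact cayley_mob_eq_mul him hconj (hstep n).1
  refine Or.inr ⟨|b / d| + 1, by positivity, fun _ => 0, fun n => by simp, fun M => ?_⟩
  obtain ⟨n, hn⟩ := exists_lt_abs_of_cayley_eq_rotation him hirr hrot M
  exact ⟨n, w n, horbit n, by simpa using hn⟩

/-- `g` real elliptic (`c ≠ 0`, `ad - bc = 1`, `-2 < a + d < 2`), `α` a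
non-real fixed point, and the conjugate `h ∘ g ∘ h⁻¹`, `h(z) = (z - α)/(z - ᾱ)`, is an
irrational rotation `z ↦ e^{iθ} z`. Then for any `b₀ ∈ ℝ`, either `gᵏ(b₀) = ∞` for some
`k ≥ 1`, or the solution of `b_{n+1} = g(b_n)` starting at `b₀` has no Hyers-Ulam
stability: some `ε`-approximate solution stays at unbounded distance from it. -/
theorem stmt7 (a b c d : ℝ) (hc : c ≠ 0) (hdet : a * d - b * c = 1)
    (h1 : -2 < a + d) (h2 : a + d < 2) (α : ℂ) (him : α.im ≠ 0)
    (hα : (c : ℂ) * α ^ 2 - ((a : ℂ) - (d : ℂ)) * α - (b : ℂ) = 0)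
    (θ : ℝ) (hirr : Irrational (θ / (2 * Real.pi)))
    (hconj : ∀ z : OnePoint ℂ,
      mob 1 (-α) 1 (-(starRingEnd ℂ α)) (mob (a : ℂ) (b : ℂ) (c : ℂ) (d : ℂ) z) =
        mob (Complex.exp ((θ : ℂ) * Complex.I)) 0 0 1
          (mob 1 (-α) 1 (-(starRingEnd ℂ α)) z))
    (b₀ : ℝ) :
    (∃ k : ℕ, 1 ≤ k ∧ (mob a b c d)^[k] ((b₀ : OnePoint ℝ)) = ∞) ∨
    (∃ ε > (0 : ℝ), ∃ aseq : ℕ → ℝ,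
      (∀ n : ℕ, |aseq (n + 1) - (a * aseq n + b) / (c * aseq n + d)| ≤ ε) ∧
      ∀ M : ℝ, ∃ n : ℕ, ∃ w : ℝ,
        (mob a b c d)^[n] ((b₀ : OnePoint ℝ)) = (w : OnePoint ℝ) ∧ M < |aseq n - w|) :=
  stmt7_general a b c d α him θ hirr hconj b₀
end

section
/- Let f be an elliptic Möbius transformation on the Riemann sphere with invariant extended line ℓ̂. Suppose there exists z ∈ ℓ̂ such that fᵏ(z) ≠ z for all k ∈ ℕ. Then for every z ∈ ℓ whose forward orbit avoids ∞, the sequence {fᵏ(z) : k ∈ ℕ} is dense in ℓ = ℓ̂ \ {∞}. -/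
open OnePoint Complex

/-!
Let `α ≠ β` be the fixed points of `f` and `h z = (z - β) / (z - α)`. Then `h ∘ f = μ • h` with
multiplier `μ = (cα + d)²`. The numbers `cα + d` and `cβ + d` have product `ad - bc = 1` and sum
`a + d ∈ (-2, 2)`, which forces `|cα + d| = 1`, so `h` conjugates `f` on `ℓ̂` (which `h` maps into
the unit circle) to the rotation by `μ`. A non-periodic point of `ℓ̂` makes `μ` a non-root of unity,
whose positive powers are dense in the circle (by the irrationality criterion on `AddCircle`, and
because in a compact group the closure of a cyclic semigroup is a group). Pulling back by the
inverse Möbius map `v ↦ (αv - β) / (v - 1)`, continuous away from `v = h ∞ = 1`, gives density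
of the orbit in `ℓ`.
-/

section FixedPoints

variable {K : Type*} [Field K] {a b c d α β : K}

open Classical in
lemma mob_coe (w : K) :
    mob a b c d (w : OnePoint K) =
      if c * w + d = 0 then ∞ else (((a * w + b) / (c * w + d) : K) : OnePoint K) := rfl

lemma mob_infty (hc : c ≠ 0) : mob a b c d ∞ = ((a / c : K) : OnePoint K) := if_neg hc

lemma mul_add_eq_sub_of_fixedPoints (hα : c * α ^ 2 - (a - d) * α - b = 0)
    (hβ : c * β ^ 2 - (a - d) * β - b = 0) (hαβ : α ≠ β) : c * (α + β) = a - d := by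
  have h : (α - β) * (c * (α + β) - (a - d)) = 0 := by linear_combination hα - hβ
  exact sub_eq_zero.1 ((mul_eq_zero.1 h).resolve_left (sub_ne_zero.2 hαβ))

lemma multipliers_mul_eq_one (hdet : a * d - b * c = 1) (hα : c * α ^ 2 - (a - d) * α - b = 0)
    (hβ : c * β ^ 2 - (a - d) * β - b = 0) (hαβ : α ≠ β) : (c * α + d) * (c * β + d) = 1 := by
  linear_combination (c * α + d) * mul_add_eq_sub_of_fixedPoints hα hβ hαβ - c * hα + hdet

lemma mob_sub_fixedPoint (hsum : c * (α + β) = a - d) (hprod : c * (α * β) = -b) {w : K}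
    (hw : c * w + d ≠ 0) :
    (a * w + b) / (c * w + d) - β = (w - β) * (c * α + d) / (c * w + d) := by
  rw [div_sub' hw]
  congr 1
  linear_combination (-w) * hsum + hprod

end FixedPoints

section Linearizer

variable {K : Type*} [Field K] {α β : K}

/- The map `h` of the paper, extended by its limit `1` at `∞`; at `α` it takes the junk value
`(α - β) / 0 = 0`, which it shares with `β`. -/
noncomputable def linearizer (α β : K) (x : OnePoint K) : K :=
  x.elim 1 fun w ↦ (w - β) / (w - α)

@[simp] lemma linearizer_infty : linearizer α β ∞ = 1 := rfl

@[simp] lemma linearizer_coe (w : K) : linearizer α β w = (w - β) / (w - α) := rfl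

lemma linearizer_mob {a b c d : K} (hc : c ≠ 0) (hdet : a * d - b * c = 1)
    (hα : c * α ^ 2 - (a - d) * α - b = 0) (hβ : c * β ^ 2 - (a - d) * β - b = 0)
    (hαβ : α ≠ β) (x : OnePoint K) :
    linearizer α β (mob a b c d x) = (c * α + d) ^ 2 * linearizer α β x := by
  have hsum := mul_add_eq_sub_of_fixedPoints hα hβ hαβ
  have hprod : c * (α * β) = -b := by linear_combination α * hsum - hα
  have hmul := multipliers_mul_eq_one hdet hα hβ hαβ
  have hdiv : (c * α + d) / (c * β + d) = (c * α + d) ^ 2 := by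
    rw [eq_inv_of_mul_eq_one_right hmul, div_inv_eq_mul, sq]
  cases x with
  | infty =>
    have hα' : a - c * α = c * β + d := by linear_combination -hsum
    have hβ' : a - c * β = c * α + d := by linear_combination -hsum
    rw [mob_infty hc, linearizer_coe, linearizer_infty, div_sub' hc, div_sub' hc,
      div_div_div_cancel_right₀ hc, hα', hβ', hdiv, mul_one]
  | coe w =>
    rw [mob_coe]
    split_ifs with hw
    · have hwα : w - α = -(c * α + d) / c := by field_simp; linear_combination hw
      have hwβ : w - β = -(c * β + d) / c := by field_simp; linear_combination hw
      rw [linearizer_infty, linearizer_coe, hwα, hwβ, div_div_div_cancel_right₀ hc,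
        neg_div_neg_eq, ← hdiv, div_mul_div_comm, mul_comm (c * α + d), div_self]
      exact mul_ne_zero (right_ne_zero_of_mul_eq_one hmul) (left_ne_zero_of_mul_eq_one hmul)
    · have hsum' : c * (β + α) = a - d := by rw [add_comm, hsum]
      have hprod' : c * (β * α) = -b := by rw [mul_comm β, hprod]
      rw [linearizer_coe, linearizer_coe, mob_sub_fixedPoint hsum hprod hw,
        mob_sub_fixedPoint hsum' hprod' hw, div_div_div_cancel_right₀ hw, mul_div_mul_comm,
        hdiv, mul_comm]

lemma linearizer_leftInvOn (hαβ : α ≠ β) :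
    Set.LeftInvOn (fun v ↦ (α * v - β) / (v - 1)) (fun w ↦ (w - β) / (w - α)) {α}ᶜ := by
  intro w hw
  have hwα : w - α ≠ 0 := sub_ne_zero.2 hw
  have hαβ' : α - β ≠ 0 := sub_ne_zero.2 hαβ
  dsimp only
  rw [div_sub_one hwα, mul_div_assoc', div_sub' hwα, div_div_div_cancel_right₀ hwα,
    div_eq_iff (by simpa using hαβ')]
  ring

lemma ne_of_linearizer_coe_ne_zero {w : K} (h : linearizer α β w ≠ 0) : w ≠ α := by
  rintro rfl
  simp at h

lemma linearizer_injOn (hαβ : α ≠ β) : Set.InjOn (linearizer α β) {x | linearizer α β x ≠ 0} := by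
  have ne_one {w : K} (hw : linearizer α β w ≠ 0) : linearizer α β w ≠ 1 := by
    rw [linearizer_coe, ne_eq, div_eq_one_iff_eq (sub_ne_zero.2 (ne_of_linearizer_coe_ne_zero hw)),
      sub_right_inj]
    exact hαβ.symm
  intro x hx y hy hxy
  cases x with
  | infty => cases y with
    | infty => rfl
    | coe w' => exact absurd hxy.symm (ne_one hy)
  | coe w => cases y with
    | infty => exact absurd hxy (ne_one hx)
    | coe w' =>
      rw [← linearizer_leftInvOn hαβ (ne_of_linearizer_coe_ne_zero hx),
        ← linearizer_leftInvOn hαβ (ne_of_linearizer_coe_ne_zero hy)]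
      exact congrArg (fun w ↦ ((α * w - β) / (w - 1) : OnePoint K)) hxy

end Linearizer

lemma map_iterate_of_map_eq_mul {X M : Type*} [Monoid M] {f : X → X} {L : X → M} {μ : M}
    (h : ∀ x, L (f x) = μ * L x) (k : ℕ) (x : X) : L (f^[k] x) = μ ^ k * L x := by
  rw [(Function.Semiconj.iterate_right h k).eq, mul_left_iterate]

lemma orderOf_eq_zero_of_map_eq_mul {X K : Type*} [MonoidWithZero K] {f : X → X} {L : X → K}
    {μ : K} (h : ∀ x, L (f x) = μ * L x) (hL : Set.InjOn L {x | L x ≠ 0}) {x : X} (hx : L x ≠ 0)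
    (hper : ∀ k, 1 ≤ k → f^[k] x ≠ x) : orderOf μ = 0 := by
  refine orderOf_eq_zero_iff'.2 fun k hk hμk ↦ hper k hk (hL ?_ hx ?_) <;>
    simp [map_iterate_of_map_eq_mul h, hμk, hx]

lemma Complex.norm_eq_one_of_mul_eq_one {u v : ℂ} (huv : u * v = 1) (him : (u + v).im = 0)
    (hre : |(u + v).re| < 2) : ‖u‖ = 1 := by
  obtain rfl : v = u⁻¹ := eq_inv_of_mul_eq_one_right huv
  have hn : 0 < normSq u := normSq_pos.2 (left_ne_zero_of_mul_eq_one huv)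
  simp only [add_im, inv_im, add_re, inv_re, abs_lt] at him hre
  rcases eq_or_ne u.im 0 with h | h
  · rw [normSq_apply, h, mul_zero, add_zero] at hn hre
    have hx : u.re ≠ 0 := fun h0 ↦ by simp [h0] at hn
    rw [div_mul_cancel_left₀ hx] at hre
    nlinarith [sq_nonneg (u.re - u.re⁻¹), mul_inv_cancel₀ hx]
  · have hu : normSq u = 1 := by
      field_simp at him
      linarith [(mul_eq_zero.1 (him.trans (mul_zero _))).resolve_left h]
    rw [norm_def, hu, Real.sqrt_one]

lemma norm_multiplier_eq_one {a b c d α β : ℂ} (hdet : a * d - b * c = 1)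
    (him : (a + d).im = 0) (hre : |(a + d).re| < 2) (hα : c * α ^ 2 - (a - d) * α - b = 0)
    (hβ : c * β ^ 2 - (a - d) * β - b = 0) (hαβ : α ≠ β) : ‖(c * α + d) ^ 2‖ = 1 := by
  have htr : (c * α + d) + (c * β + d) = a + d := by
    linear_combination mul_add_eq_sub_of_fixedPoints hα hβ hαβ
  rw [norm_pow, Complex.norm_eq_one_of_mul_eq_one (multipliers_mul_eq_one hdet hα hβ hαβ)
    (htr ▸ him) (htr ▸ hre), one_pow]

lemma norm_linearizer_eq_one {α β : ℂ} (hαβ : α ≠ β) {x : OnePoint ℂ}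
    (hx : x ∈ ({∞} ∪ (fun w : ℂ => (w : OnePoint ℂ)) '' {w : ℂ | ‖w - α‖ = ‖w - β‖})) :
    ‖linearizer α β x‖ = 1 := by
  rcases hx with rfl | ⟨w, hw, rfl⟩
  · simp
  · have hwβ : ‖w - β‖ ≠ 0 := by
      rintro h
      rw [norm_eq_zero, sub_eq_zero] at h
      subst h
      exact hαβ (sub_eq_zero.1 (norm_eq_zero.1 (by simpa [norm_sub_rev] using hw)))
    rw [linearizer_coe, norm_div, hw, div_self hwβ]

theorem Circle.denseRange_pow_of_orderOf_eq_zero {μ : Circle} (hμ : orderOf μ = 0) :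
    DenseRange (μ ^ · : ℕ → Circle) := by
  rw [← denseRange_zpow_iff_pow]
  let e := AddCircle.homeomorphCircle (T := 1) one_ne_zero
  have he (n : ℤ) (θ : AddCircle (1 : ℝ)) : e (n • θ) = e θ ^ n := by
    simp only [e, AddCircle.homeomorphCircle_apply, AddCircle.toCircle_zsmul]
  obtain ⟨θ, rfl⟩ := e.surjective μ
  have hθ : addOrderOf θ = 0 := by
    refine addOrderOf_eq_zero_iff'.2 fun n hn hnθ ↦ orderOf_eq_zero_iff'.1 hμ n hn ?_
    rw [← zpow_natCast, ← he, natCast_zsmul, hnθ]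
    simp [e, AddCircle.homeomorphCircle_apply]
  simpa only [Function.comp_def, he] using
    e.surjective.denseRange.comp (AddCircle.denseRange_zsmul_iff.2 hθ) e.continuous

lemma Complex.mem_closure_range_pow_succ_mul {μ ζ v : ℂ} (hμ : ‖μ‖ = 1) (hμ₀ : orderOf μ = 0)
    (hζ : ‖ζ‖ = 1) (hv : ‖v‖ = 1) : v ∈ closure (Set.range fun k : ℕ ↦ μ ^ (k + 1) * ζ) := by
  let μ' : Circle := ⟨μ, mem_sphere_zero_iff_norm.2 hμ⟩
  let ζ' : Circle := ⟨ζ, mem_sphere_zero_iff_norm.2 hζ⟩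
  let v' : Circle := ⟨v, mem_sphere_zero_iff_norm.2 hv⟩
  have hμ' : orderOf μ' = 0 := by
    rwa [← orderOf_injective Circle.coeHom Circle.coe_injective μ']
  let e := (Homeomorph.mulLeft μ').trans (Homeomorph.mulRight ζ')
  have hdense : DenseRange fun k : ℕ ↦ μ' ^ (k + 1) * ζ' := by
    simpa [e, Function.comp_def, pow_succ'] using
      e.surjective.denseRange.comp (Circle.denseRange_pow_of_orderOf_eq_zero hμ') e.continuous
  refine closure_mono ?_ (mem_closure_image continuous_subtype_val.continuousAt (hdense v'))
  rintro _ ⟨_, ⟨k, rfl⟩, rfl⟩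
  exact ⟨k, rfl⟩

lemma mem_closure_orbit_of_linearizer_map_eq_mul {f : OnePoint ℂ → OnePoint ℂ} {α β μ : ℂ}
    (hαβ : α ≠ β) (hf : ∀ x, linearizer α β (f x) = μ * linearizer α β x) (hμ : ‖μ‖ = 1)
    (hμ₀ : orderOf μ = 0) {z y : ℂ} (hz : ‖linearizer α β z‖ = 1) (hzorb : ∀ k, f^[k] z ≠ ∞)
    (hy : ‖linearizer α β y‖ = 1) :
    y ∈ closure {w : ℂ | ∃ k, 1 ≤ k ∧ f^[k] z = w} := by
  set L := linearizer α β
  have hL_ne_zero {x} (hx : ‖L x‖ = 1) : L x ≠ 0 := norm_ne_zero_iff.1 (hx ▸ one_ne_zero)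
  let g : ℂ → ℂ := fun v ↦ (α * v - β) / (v - 1)
  have hg_inv {w : ℂ} (hw : ‖L w‖ = 1) : g (L w) = w :=
    linearizer_leftInvOn hαβ (ne_of_linearizer_coe_ne_zero (hL_ne_zero hw))
  have horbit : (Set.range fun k : ℕ ↦ g (μ ^ (k + 1) * L z)) ⊆
      {w : ℂ | ∃ k, 1 ≤ k ∧ f^[k] z = w} := by
    rintro _ ⟨k, rfl⟩
    obtain ⟨w, hw⟩ := OnePoint.ne_infty_iff_exists.1 (hzorb (k + 1))
    have hLw : L w = μ ^ (k + 1) * L z := by rw [hw]; exact map_iterate_of_map_eq_mul hf _ _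
    have hLw_norm : ‖L w‖ = 1 := by rw [hLw, norm_mul, norm_pow, hμ, one_pow, one_mul, hz]
    refine ⟨k + 1, le_add_self, ?_⟩
    beta_reduce
    rw [← hw, ← hLw, hg_inv hLw_norm]
  have hLy : L y ≠ 1 := fun h ↦ OnePoint.coe_ne_infty y <|
    linearizer_injOn hαβ (hL_ne_zero hy) (by simp) (h.trans linearizer_infty.symm)
  have hg : ContinuousAt g (L y) := ContinuousAt.div (by fun_prop) (by fun_prop) (sub_ne_zero.2 hLy)
  have := mem_closure_image hg (Complex.mem_closure_range_pow_succ_mul hμ hμ₀ hz hy)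
  rw [hg_inv hy, ← Set.range_comp] at this
  exact closure_mono horbit this

/-- `f` elliptic (`c ≠ 0`, `ad - bc = 1`, `a + d` real in `(-2,2)`) with
fixed points `α ≠ β` and invariant extended line `ℓ̂ = {z : |z-α| = |z-β|} ∪ {∞}`.
If some point of `ℓ̂` is not periodic under `f`, then for every `z ∈ ℓ` whose forward
orbit avoids `∞`, the orbit `{fᵏ(z) : k ≥ 1}` is dense in `ℓ = ℓ̂ \ {∞}`. -/
theorem stmt12 (a b c d : ℂ) (hc : c ≠ 0) (hdet : a * d - b * c = 1)
    (him : (a + d).im = 0) (h1 : -2 < (a + d).re) (h2 : (a + d).re < 2)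
    (α β : ℂ) (hαβ : α ≠ β)
    (hα : c * α ^ 2 - (a - d) * α - b = 0)
    (hβ : c * β ^ 2 - (a - d) * β - b = 0)
    (hnp : ∃ z : OnePoint ℂ,
      z ∈ ({∞} ∪ (fun w : ℂ => (w : OnePoint ℂ)) ''
        {w : ℂ | ‖w - α‖ = ‖w - β‖}) ∧
      ∀ k : ℕ, 1 ≤ k → (mob a b c d)^[k] z ≠ z)
    (z : ℂ) (hz : ‖z - α‖ = ‖z - β‖)
    (hzorb : ∀ k : ℕ, (mob a b c d)^[k] ((z : OnePoint ℂ)) ≠ ∞) :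
    ∀ y : ℂ, ‖y - α‖ = ‖y - β‖ →
      y ∈ closure {w : ℂ | ∃ k : ℕ, 1 ≤ k ∧
        (mob a b c d)^[k] ((z : OnePoint ℂ)) = (w : OnePoint ℂ)} := by
  have hline {w : ℂ} (hw : ‖w - α‖ = ‖w - β‖) : ‖linearizer α β w‖ = 1 :=
    norm_linearizer_eq_one hαβ (Or.inr ⟨w, hw, rfl⟩)
  have hf := linearizer_mob hc hdet hα hβ hαβ
  have hμ₀ : orderOf ((c * α + d) ^ 2) = 0 := by
    obtain ⟨x₀, hx₀, hper⟩ := hnp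
    have hx₀' := norm_linearizer_eq_one hαβ hx₀
    exact orderOf_eq_zero_of_map_eq_mul hf (linearizer_injOn hαβ)
      (norm_ne_zero_iff.1 (hx₀' ▸ one_ne_zero)) hper
  intro y hy
  exact mem_closure_orbit_of_linearizer_map_eq_mul hαβ hf
    (norm_multiplier_eq_one hdet him (abs_lt.2 ⟨h1, h2⟩) hα hβ hαβ) hμ₀ (hline hz) hzorb (hline hy)
end
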